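/- Every λμ-term in normal form is typeable in the restricted intersection type system: if N is a βμ-normal form then there exist a basis Γ, a name context Δ, and a restricted arrow type κ→ψ with Γ ⊢ᴿ N : κ→ψ | Δ. -/

import Mathlib

-- Terms and commands of the untyped λμ-calculus.
mutual
inductive Trm : Type where
  | var : Nat → Trm
  | lam : Nat → Trm → Trm
  | app : Trm → Trm → Trm
  | mu  : Nat → Cm → Trm
inductive Cm : Type where
  | nam : Nat → Trm → Cm
end

-- Ordinary term substitution `T[L/x]`.
mutual
def subT : Trm → Nat → Trm → Trm
  | .var y, x, L => if y = x then L else .var y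
  | .lam y M, x, L => if y = x then .lam y M else .lam y (subT M x L)
  | .app M N, x, L => .app (subT M x L) (subT N x L)
  | .mu a C, x, L => .mu a (subC C x L)
def subC : Cm → Nat → Trm → Cm
  | .nam a M, x, L => .nam a (subT M x L)
end

-- Structural substitution `T[α ⇐ L]`.
mutual
def ssubT : Trm → Nat → Trm → Trm
  | .var y, _, _ => .var y
  | .lam y M, a, L => .lam y (ssubT M a L)
  | .app M N, a, L => .app (ssubT M a L) (ssubT N a L)
  | .mu b C, a, L => if b = a then .mu b C else .mu b (ssubC C a L)
def ssubC : Cm → Nat → Trm → Cm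
  | .nam b M, a, L =>
      if b = a then .nam b (.app (ssubT M a L) L) else .nam b (ssubT M a L)
end

-- Restricted types: term types δ ::= κ→ψ | δ∧δ ; continuation types
-- κ ::= ω | δ×κ | κ∧κ  (ψ is a single type constant, left implicit in `arr`).
mutual
inductive RTy : Type where
  | arr : RKy → RTy
  | inter : RTy → RTy → RTy
inductive RKy : Type where
  | omega : RKy
  | prod : RTy → RKy → RKy
  | inter : RKy → RKy → RKy
end

-- The restricted preorders ≤ᴿ on term and continuation types.
mutual
inductive RLeD : RTy → RTy → Prop where
  | refl : ∀ δ, RLeD δ δ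
  | trans : ∀ {δ₁ δ₂ δ₃}, RLeD δ₁ δ₂ → RLeD δ₂ δ₃ → RLeD δ₁ δ₃
  | interL : ∀ δ₁ δ₂, RLeD (.inter δ₁ δ₂) δ₁
  | interR : ∀ δ₁ δ₂, RLeD (.inter δ₁ δ₂) δ₂
  | interGlb : ∀ {δ δ₁ δ₂}, RLeD δ δ₁ → RLeD δ δ₂ → RLeD δ (.inter δ₁ δ₂)
  | arr : ∀ {κ₁ κ₂}, RLeC κ₂ κ₁ → RLeD (.arr κ₁) (.arr κ₂)
inductive RLeC : RKy → RKy → Prop where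
  | refl : ∀ κ, RLeC κ κ
  | trans : ∀ {κ₁ κ₂ κ₃}, RLeC κ₁ κ₂ → RLeC κ₂ κ₃ → RLeC κ₁ κ₃
  | interL : ∀ κ₁ κ₂, RLeC (.inter κ₁ κ₂) κ₁
  | interR : ∀ κ₁ κ₂, RLeC (.inter κ₁ κ₂) κ₂
  | interGlb : ∀ {κ κ₁ κ₂}, RLeC κ κ₁ → RLeC κ κ₂ → RLeC κ (.inter κ₁ κ₂)
  | leOmega : ∀ κ, RLeC κ .omega
  | prodDist : ∀ δ₁ κ₁ δ₂ κ₂,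
      RLeC (.inter (.prod δ₁ κ₁) (.prod δ₂ κ₂)) (.prod (.inter δ₁ δ₂) (.inter κ₁ κ₂))
  | prodMono : ∀ {δ₁ δ₂ κ₁ κ₂}, RLeD δ₁ δ₂ → RLeC κ₁ κ₂ →
      RLeC (.prod δ₁ κ₁) (.prod δ₂ κ₂)
end

-- The restricted intersection type assignment system for λμ
-- (bases Γ : Nat → Option RTy, name contexts Δ : Nat → RKy with default ω).
mutual
inductive RTyT : (Nat → Option RTy) → Trm → RTy → (Nat → RKy) → Prop where
  | ax : ∀ {Γ x δ Δ}, Γ x = some δ → RTyT Γ (.var x) δ Δ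
  | abs : ∀ {Γ x δ M κ Δ},
      RTyT (Function.update Γ x (some δ)) M (.arr κ) Δ →
      RTyT Γ (.lam x M) (.arr (.prod δ κ)) Δ
  | app : ∀ {Γ M N δ κ Δ},
      RTyT Γ M (.arr (.prod δ κ)) Δ → RTyT Γ N δ Δ →
      RTyT Γ (.app M N) (.arr κ) Δ
  | mu : ∀ {Γ a C κ κ' Δ},
      RTyC Γ C (.prod (.arr κ') κ') (Function.update Δ a κ) →
      RTyT Γ (.mu a C) (.arr κ) Δ
  | inter : ∀ {Γ M δ₁ δ₂ Δ},
      RTyT Γ M δ₁ Δ → RTyT Γ M δ₂ Δ → RTyT Γ M (.inter δ₁ δ₂) Δ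
  | sub : ∀ {Γ M δ δ' Δ}, RTyT Γ M δ Δ → RLeD δ δ' → RTyT Γ M δ' Δ
inductive RTyC : (Nat → Option RTy) → Cm → RKy → (Nat → RKy) → Prop where
  | cmd : ∀ {Γ M δ a κ Δ}, RTyT Γ M δ Δ → Δ a = κ →
      RTyC Γ (.nam a M) (.prod δ κ) Δ
  | inter : ∀ {Γ C κ₁ κ₂ Δ},
      RTyC Γ C κ₁ Δ → RTyC Γ C κ₂ Δ → RTyC Γ C (.inter κ₁ κ₂) Δ
  | sub : ∀ {Γ C κ κ' Δ}, RTyC Γ C κ Δ → RLeC κ κ' → RTyC Γ C κ' Δ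
end

-- βμ-normal forms: N ::= x N₁ ⋯ Nₖ | λx.N | μα.[β]N.
mutual
inductive NfT : Trm → Prop where
  | ne : ∀ {M}, NeT M → NfT M
  | lam : ∀ (x : Nat) {M}, NfT M → NfT (.lam x M)
  | mu : ∀ (a b : Nat) {M}, NfT M → NfT (.mu a (.nam b M))
inductive NeT : Trm → Prop where
  | var : ∀ x, NeT (.var x)
  | app : ∀ {M N}, NeT M → NfT N → NeT (.app M N)
end

/-!
Give every variable the type `ω→ψ`, which lies below every arrow type, so that a neutral term
`x N₁ ⋯ Nₖ` can be given any arrow type once the arguments are typed. Typing is antitone in the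
name context, so the name contexts of subterms can be merged by pointwise intersection. For
`μα.[β]M` with `M : κ→ψ` under `Θ`, strengthening the entry of `β` to `Θ β ∧ κ` makes the type
of `M` match the continuation of `β`, as the naming rule requires.
-/

def omegaBasis : Nat → Option RTy := fun _ => some (.arr .omega)

theorem RLeC.update_le_update {Δ Θ : Nat → RKy} (hΔ : ∀ b, RLeC (Δ b) (Θ b)) (a : Nat)
    {κ κ' : RKy} (hκ : RLeC κ κ') (b : Nat) :
    RLeC (Function.update Δ a κ b) (Function.update Θ a κ' b) := by
  by_cases h : b = a
  · subst h; simpa using hκ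
  · simpa [Function.update_of_ne h] using hΔ b

mutual
theorem RTyT.antitone_names {Γ : Nat → Option RTy} {M : Trm} {δ : RTy} {Δ Δ' : Nat → RKy} :
    RTyT Γ M δ Δ → (∀ b, RLeC (Δ' b) (Δ b)) → RTyT Γ M δ Δ'
  | .ax h, _ => .ax h
  | .abs h, hΔ => .abs (h.antitone_names hΔ)
  | .app h₁ h₂, hΔ => .app (h₁.antitone_names hΔ) (h₂.antitone_names hΔ)
  | .mu (a := a) (κ := κ) h, hΔ =>
      .mu (h.antitone_names (RLeC.update_le_update hΔ a (.refl κ)))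
  | .inter h₁ h₂, hΔ => .inter (h₁.antitone_names hΔ) (h₂.antitone_names hΔ)
  | .sub h hle, hΔ => .sub (h.antitone_names hΔ) hle
theorem RTyC.antitone_names {Γ : Nat → Option RTy} {C : Cm} {κ : RKy} {Δ Δ' : Nat → RKy} :
    RTyC Γ C κ Δ → (∀ b, RLeC (Δ' b) (Δ b)) → RTyC Γ C κ Δ'
  | .cmd (a := a) h rfl, hΔ =>
      .sub (.cmd (h.antitone_names hΔ) rfl) (.prodMono (.refl _) (hΔ a))
  | .inter h₁ h₂, hΔ => .inter (h₁.antitone_names hΔ) (h₂.antitone_names hΔ)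
  | .sub h hle, hΔ => .sub (h.antitone_names hΔ) hle
end

theorem RTyT.mu_nam_of_arr {Γ : Nat → Option RTy} {M : Trm} {κ : RKy} {Θ : Nat → RKy}
    (hM : RTyT Γ M (.arr κ) Θ) (a b : Nat) :
    RTyT Γ (.mu a (.nam b M)) (.arr (Function.update Θ b (.inter (Θ b) κ) a))
      (Function.update Θ b (.inter (Θ b) κ)) := by
  set Δ := Function.update Θ b (.inter (Θ b) κ)
  have hΔ : ∀ c, RLeC (Δ c) (Θ c) := by
    simpa [Function.update_eq_self] using
      RLeC.update_le_update (fun c => .refl (Θ c)) b (.interL (Θ b) κ)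
  have hMΔ : RTyT Γ M (.arr (Δ b)) Δ :=
    .sub (hM.antitone_names hΔ) (.arr (by simpa [Δ] using .interR (Θ b) κ))
  exact .mu (by simpa [Function.update_eq_self] using RTyC.cmd hMΔ rfl)

mutual
theorem NeT.typeable {M : Trm} :
    NeT M → ∃ Θ : Nat → RKy, ∀ κ, RTyT omegaBasis M (.arr κ) Θ
  | .var x => ⟨fun _ => .omega, fun κ => .sub (.ax rfl) (.arr (.leOmega κ))⟩
  | .app hM hN => by
      obtain ⟨ΘM, hM⟩ := hM.typeable
      obtain ⟨κN, ΘN, hN⟩ := hN.typeable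
      exact ⟨fun c => .inter (ΘM c) (ΘN c), fun κ =>
        .app ((hM (.prod (.arr κN) κ)).antitone_names fun c => .interL _ _)
          (hN.antitone_names fun c => .interR _ _)⟩
theorem NfT.typeable {M : Trm} :
    NfT M → ∃ (κ : RKy) (Θ : Nat → RKy), RTyT omegaBasis M (.arr κ) Θ
  | .ne hM => by
      obtain ⟨Θ, hM⟩ := hM.typeable
      exact ⟨.omega, Θ, hM .omega⟩
  | .lam x hM => by
      obtain ⟨κ, Θ, hM⟩ := hM.typeable
      exact ⟨.prod (.arr .omega) κ, Θ, .abs ((Function.update_eq_self x omegaBasis).symm ▸ hM)⟩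
  | .mu a b hM => by
      obtain ⟨κ, Θ, hM⟩ := hM.typeable
      exact ⟨_, _, hM.mu_nam_of_arr a b⟩
end

/-- Every λμ-term in normal form is typeable in the restricted intersection type
system with an arrow type. -/
theorem normal_forms_typeable (N : Trm) (h : NfT N) :
    ∃ (Γ : Nat → Option RTy) (Δ : Nat → RKy) (κ : RKy),
      RTyT Γ N (.arr κ) Δ := by
  obtain ⟨κ, Δ, hN⟩ := h.typeable
  exact ⟨omegaBasis, Δ, κ, hN⟩
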